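/- Let b' < b be positive integers, X a finite set, and F ⊆ 2^X. If Maker has a winning strategy in the (1,b) Maker-Breaker game on (X,F), then Maker has a strategy to win the (1,b') game on (X,F) within ⌈|X|/(b+1)⌉ moves. -/

import Mathlib

open Finset

variable {α : Type*} [Fintype α] [DecidableEq α]

/-- `makerWinsAux F b fuel t M B` : in the `(1,b)` Maker-Breaker game on the finite
board `α` with family of winning sets `F`, from the position where Maker has claimed
`M` and Breaker has claimed `B`, the player to move being Maker if `t = true` and
Breaker if `t = false`, Maker can force that at some point he has fully claimed some
winning set.  Maker claims one previously unclaimed element per turn and Breaker claims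
`b` previously unclaimed elements (or all remaining ones if fewer remain).  `fuel`
bounds the number of remaining turns; `fuel = |α| + 1` captures the full game. -/
def makerWinsAux (F : Finset (Finset α)) (b : ℕ) :
    ℕ → Bool → Finset α → Finset α → Prop
  | 0, _, M, _ => ∃ W ∈ F, W ⊆ M
  | fuel + 1, t, M, B =>
      (∃ W ∈ F, W ⊆ M) ∨
        (let free := Finset.univ \ (M ∪ B)
        free.Nonempty ∧
          if t then
            ∃ x ∈ free, makerWinsAux F b fuel false (insert x M) B
          else
            ∀ S ⊆ free, S.card = min b free.card →
              makerWinsAux F b fuel true M (B ∪ S))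

/-- `makerWinsInAux F b fuel t M B m` : as in `makerWinsAux`, but moreover Maker can
win making at most `m` further moves of his own. -/
def makerWinsInAux (F : Finset (Finset α)) (b : ℕ) :
    ℕ → Bool → Finset α → Finset α → ℕ → Prop
  | 0, _, M, _, _ => ∃ W ∈ F, W ⊆ M
  | fuel + 1, t, M, B, m =>
      (∃ W ∈ F, W ⊆ M) ∨
        (let free := Finset.univ \ (M ∪ B)
        free.Nonempty ∧
          if t then
            0 < m ∧ ∃ x ∈ free, makerWinsInAux F b fuel false (insert x M) B (m - 1)
          else
            ∀ S ⊆ free, S.card = min b free.card →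
              makerWinsInAux F b fuel true M (B ∪ S) m)

/-- Maker has a winning strategy in the `(1,b)` game `(α,F)`, moving first
(`t = true`) or second (`t = false`). -/
def MakerWins (F : Finset (Finset α)) (b : ℕ) (t : Bool) : Prop :=
  makerWinsAux F b (Fintype.card α + 1) t ∅ ∅

/-- Maker has a strategy to win the `(1,b)` game `(α,F)` within `m` moves. -/
def MakerWinsIn (F : Finset (Finset α)) (b : ℕ) (t : Bool) (m : ℕ) : Prop :=
  makerWinsInAux F b (Fintype.card α + 1) t ∅ ∅ m

/-!
Maker plays the `(1,b')` game by simulating his `(1,b)` strategy: whenever the real Breaker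
claims `b'` elements, Maker pretends that Breaker also claimed `b - b'` further free elements
("fake moves") and answers as the `(1,b)` strategy would. The real Breaker's claims always lie
inside the simulated Breaker's, so the simulated win is a real win. Every round of the
simulated game consumes `b + 1` free elements, so it lasts at most `⌈|α|/(b+1)⌉` rounds.
-/

lemma Finset.exists_subset_card_eq_min_inter_subset {β : Type*} [DecidableEq β]
    {S T : Finset β} {b : ℕ} (hS : #S ≤ b) :
    ∃ S' ⊆ T, #S' = min b #T ∧ S ∩ T ⊆ S' := by
  obtain ⟨S', hsub, hsup, hcard⟩ := exists_subsuperset_card_eq inter_subset_right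
    (le_min (le_trans (card_le_card inter_subset_left) hS) (card_le_card inter_subset_right))
    (min_le_right b #T)
  exact ⟨S', hsup, hcard, hsub⟩

lemma exists_fake_breaker_move {M Bs Ba S : Finset α} {b b' : ℕ} (hbb : b' ≤ b)
    (hBa : Ba ⊆ Bs) (hS : S ⊆ univ \ (M ∪ Ba)) (hScard : #S = min b' #(univ \ (M ∪ Ba))) :
    ∃ S' ⊆ univ \ (M ∪ Bs), #S' = min b #(univ \ (M ∪ Bs)) ∧ Ba ∪ S ⊆ Bs ∪ S' := by
  obtain ⟨S', hS'free, hS'card, hSS'⟩ :=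
    exists_subset_card_eq_min_inter_subset (T := univ \ (M ∪ Bs))
      (hScard.trans_le ((min_le_left _ _).trans hbb))
  refine ⟨S', hS'free, hS'card, union_subset (hBa.trans subset_union_left) fun x hx => ?_⟩
  by_cases hxfree : x ∈ univ \ (M ∪ Bs)
  · exact mem_union_right _ (hSS' (mem_inter.2 ⟨hx, hxfree⟩))
  · have := hS hx
    simp only [mem_sdiff, mem_univ, true_and, mem_union, not_or] at this hxfree
    exact mem_union_left _ (by tauto)

/-- `Bs` is the simulated Breaker's set; when Breaker is to move, his pending `b` claims are not
yet charged against Maker's remaining budget `m`. -/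
lemma makerWinsInAux_of_makerWinsAux (F : Finset (Finset α)) {b b' : ℕ} (hbb : b' ≤ b) :
    ∀ (fuel : ℕ) (t : Bool) (M Bs Ba : Finset α) (m : ℕ), Ba ⊆ Bs →
      #(univ \ (M ∪ Bs)) ≤ m * (b + 1) + (if t then 0 else b) →
      makerWinsAux F b fuel t M Bs → makerWinsInAux F b' fuel t M Ba m := by
  intro fuel
  induction fuel with
  | zero =>
    intro t M Bs Ba m _ _ h
    simpa only [makerWinsAux, makerWinsInAux] using h
  | succ fuel ih =>
    intro t M Bs Ba m hBa hcard h
    rw [makerWinsAux] at h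
    rw [makerWinsInAux]
    rcases h with hwon | ⟨hfree, h⟩
    · exact Or.inl hwon
    have hfree_sub : univ \ (M ∪ Bs) ⊆ univ \ (M ∪ Ba) :=
      sdiff_subset_sdiff subset_rfl (union_subset_union subset_rfl hBa)
    refine Or.inr ⟨hfree.mono hfree_sub, ?_⟩
    cases t with
    | true =>
      simp only [if_true] at h hcard ⊢
      obtain ⟨x, hx, hwin⟩ := h
      have hpos : 0 < #(univ \ (M ∪ Bs)) := card_pos.2 ⟨x, hx⟩
      obtain ⟨m, rfl⟩ : ∃ m', m = m' + 1 := Nat.exists_eq_succ_of_ne_zero (by rintro rfl; omega)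
      refine ⟨m.succ_pos, x, hfree_sub hx, ih false _ Bs Ba m hBa ?_ hwin⟩
      rw [insert_union, sdiff_insert, card_erase_of_mem hx]
      rw [Nat.succ_mul] at hcard
      simp only [Bool.false_eq_true, if_false]
      omega
    | false =>
      simp only [Bool.false_eq_true, if_false] at h hcard ⊢
      intro S hS hScard
      obtain ⟨S', hS'free, hS'card, hcover⟩ := exists_fake_breaker_move hbb hBa hS hScard
      refine ih true M (Bs ∪ S') (Ba ∪ S) m hcover ?_ (h S' hS'free hS'card)
      have hfree' : univ \ (M ∪ (Bs ∪ S')) = (univ \ (M ∪ Bs)) \ S' := by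
        rw [← union_assoc]; exact (sdiff_sdiff_left ..).symm
      rw [hfree', card_sdiff_of_subset hS'free, hS'card, if_pos rfl]
      omega

lemma card_le_ceil_div_mul (n b : ℕ) : n ≤ ⌈(n : ℝ) / (b + 1)⌉₊ * (b + 1) := by
  have h := Nat.le_ceil ((n : ℝ) / (b + 1))
  rw [div_le_iff₀ (by positivity)] at h
  exact_mod_cast h

theorem fake_moves_general (F : Finset (Finset α)) (b b' : ℕ) (hbb : b' < b)
    (t : Bool) (h : MakerWins F b t) :
    MakerWinsIn F b' t ⌈(Fintype.card α : ℝ) / (b + 1)⌉₊ := by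
  refine makerWinsInAux_of_makerWinsAux F hbb.le _ t ∅ ∅ ∅ _ subset_rfl ?_ h
  rw [empty_union, sdiff_empty, card_univ]
  exact (card_le_ceil_div_mul _ b).trans (Nat.le_add_right _ _)

/-- trick of fake moves. Let `b' < b` be positive integers. If Maker
has a winning strategy in the `(1,b)` Maker-Breaker game `(α,F)`, then he has a
strategy to win the `(1,b')` game `(α,F)` within `⌈|α|/(b+1)⌉` moves. -/
theorem fake_moves (F : Finset (Finset α)) (b b' : ℕ) (hb' : 0 < b') (hbb : b' < b)
    (t : Bool) (h : MakerWins F b t) :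
    MakerWinsIn F b' t ⌈(Fintype.card α : ℝ) / (b + 1)⌉₊ :=
  fake_moves_general F b b' hbb t h
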